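/- Let q be a prime power and G(q) the bipartite incidence graph between the points of F_q⁴ and the lines with directions v_z = (1, z, z², z³), z ∈ F_q. Then G(q) contains no copy of Θ_{3,5,5}. -/

import Mathlib

open SimpleGraph

/-- The generalized theta graph `Θ_{k 0, …, k (ℓ-1)}`: two endpoint vertices
(`Sum.inl 0` and `Sum.inl 1`) joined by `ℓ` internally disjoint paths, the `i`-th
path having `k i` edges (hence `k i - 1` internal vertices). -/
def thetaGraph (ℓ : ℕ) (k : Fin ℓ → ℕ) :
    SimpleGraph (Fin 2 ⊕ (Σ i : Fin ℓ, Fin (k i - 1))) :=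
  SimpleGraph.fromRel (fun a b =>
    (a = Sum.inl 0 ∧ b = Sum.inl 1 ∧ ∃ i, k i = 1) ∨
    (∃ (i : Fin ℓ) (j : Fin (k i - 1)), a = Sum.inl 0 ∧ b = Sum.inr ⟨i, j⟩ ∧ (j : ℕ) = 0) ∨
    (∃ (i : Fin ℓ) (j : Fin (k i - 1)), a = Sum.inl 1 ∧ b = Sum.inr ⟨i, j⟩ ∧ (j : ℕ) = k i - 2) ∨
    (∃ (i : Fin ℓ) (j j' : Fin (k i - 1)), a = Sum.inr ⟨i, j⟩ ∧ b = Sum.inr ⟨i, j'⟩ ∧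
      (j' : ℕ) = (j : ℕ) + 1))

/-- `G` contains a copy of `H`: an injective graph homomorphism `H →g G`. -/
def ContainsCopy {α β : Type*} (H : SimpleGraph α) (G : SimpleGraph β) : Prop :=
  ∃ f : H →g G, Function.Injective f

/-- Layer `j` of graph `G` rooted at `r`. -/
def layerSet {V : Type*} (G : SimpleGraph V) (r : V) (j : ℕ) : Set V :=
  {v | G.Reachable r v ∧ G.dist r v = j}

/-- The children of `v` (its neighbours one layer further from the root `r`). -/
def childSet {V : Type*} (G : SimpleGraph V) (r v : V) : Set V :=
  {u | G.Adj v u ∧ G.dist r u = G.dist r v + 1}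

/-- The parents of `v` (its neighbours one layer closer to the root `r`). -/
def parentSet {V : Type*} (G : SimpleGraph V) (r v : V) : Set V :=
  {u | G.Adj v u ∧ G.dist r u + 1 = G.dist r v}

/-- `u` is a descendant of `a` (w.r.t. the root `r`). -/
def IsDescendantOf {V : Type*} (G : SimpleGraph V) (r a u : V) : Prop :=
  G.Reachable a u ∧ G.dist r a + G.dist a u = G.dist r u

/-- The restriction of `G` (rooted at `r`) to its first `s` layers is a regular tree of
type `(d, s)`: every vertex in layers `0, …, s-1` has exactly `d` children and every
vertex in layers `1, …, s` has exactly one parent. -/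
def IsRegularTreeOfType {V : Type*} (G : SimpleGraph V) (r : V) (d s : ℕ) : Prop :=
  (∀ j < s, ∀ v ∈ layerSet G r j, (childSet G r v).ncard = d) ∧
  (∀ j, 1 ≤ j → j ≤ s → ∀ v ∈ layerSet G r j, (parentSet G r v).ncard = 1)

/-- `G` rooted at `r` is a regular almost-tree of type `(d, s)`: every vertex in layers
`0, …, s-1` has exactly `d` children, every vertex in layers `1, …, s-1` has exactly one
parent, and for every `v₁` in layer `1` the induced subgraph on the first `s-1` layers is
isomorphic to the induced subgraph on `v₁` together with all its descendants down to
layer `s`. -/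
def IsRegularAlmostTree {V : Type*} (G : SimpleGraph V) (r : V) (d s : ℕ) : Prop :=
  (∀ j < s, ∀ v ∈ layerSet G r j, (childSet G r v).ncard = d) ∧
  (∀ j, 1 ≤ j → j ≤ s - 1 → ∀ v ∈ layerSet G r j, (parentSet G r v).ncard = 1) ∧
  (∀ v₁ ∈ layerSet G r 1, Nonempty
    ((G.induce {u | G.Reachable r u ∧ G.dist r u ≤ s - 1}) ≃g
     (G.induce {u | G.Reachable r u ∧ G.dist r u ≤ s ∧ G.dist r u = G.dist v₁ u + 1})))

/-- The moment-curve direction `v_z = (1, z, z², z³)` in `F⁴`. -/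
def mvec {F : Type*} [Field F] (z : F) : Fin 4 → F := ![1, z, z ^ 2, z ^ 3]

/-- The line through `x` in direction `v_z`: `{x + y • v_z : y ∈ F}`. -/
def lineThrough {F : Type*} [Field F] (x : Fin 4 → F) (z : F) : Set (Fin 4 → F) :=
  {p | ∃ y : F, p = x + y • mvec z}

/-- A subset of `F⁴` is a *moment line* if it is a line in direction `v_z` for some
`z ∈ F`. -/
def IsMomentLine {F : Type*} [Field F] (l : Set (Fin 4 → F)) : Prop :=
  ∃ x z, l = lineThrough x z

/-- The vertex type of the point–line incidence graph: points of `F⁴` on the left,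
moment lines on the right. -/
def IncVert (F : Type*) [Field F] : Type _ :=
  (Fin 4 → F) ⊕ {l : Set (Fin 4 → F) // IsMomentLine l}

/-- The bipartite point–line incidence graph `G(q)`: a point `p` is adjacent to a moment
line `l` iff `p ∈ l`. -/
def incGraph (F : Type*) [Field F] : SimpleGraph (IncVert F) :=
  SimpleGraph.fromRel (fun a b =>
    ∃ (p : Fin 4 → F) (l : {l : Set (Fin 4 → F) // IsMomentLine l}),
      a = Sum.inl p ∧ b = Sum.inr l ∧ p ∈ l.1)


section ThetaAux

variable {F : Type*} [Field F]

lemma mvec_apply (z : F) (k : Fin 4) : mvec z k = z ^ (k:ℕ) := by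
  fin_cases k <;> simp [mvec]

lemma indep_gen {n : ℕ} (hn : n ≤ 4) {z c : Fin n → F} (hz : Function.Injective z)
    (h : ∑ i, c i • mvec (z i) = 0) : c = 0 := by
  apply Matrix.eq_zero_of_forall_pow_sum_mul_pow_eq_zero hz
  intro i
  have h4 := congrFun h ⟨(i : ℕ), lt_of_lt_of_le i.2 hn⟩
  simp only [Finset.sum_apply, Pi.smul_apply, Pi.zero_apply, smul_eq_mul, mvec_apply] at h4
  simpa using h4

lemma indep3' {z1 z2 z3 c1 c2 c3 : F} (h12 : z1 ≠ z2) (h13 : z1 ≠ z3) (h23 : z2 ≠ z3)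
    (h : c1 • mvec z1 + c2 • mvec z2 + c3 • mvec z3 = 0) : c1 = 0 ∧ c2 = 0 ∧ c3 = 0 := by
  have hz : Function.Injective ![z1,z2,z3] := by
    intro i j hij
    fin_cases i <;> fin_cases j <;> first | rfl | (exfalso; simp_all)
  have h' : ∑ i : Fin 3, (![c1,c2,c3]) i • mvec ((![z1,z2,z3]) i) = 0 := by
    simpa [Fin.sum_univ_three] using h
  have h0 := indep_gen (by norm_num) hz h'
  exact ⟨congrFun h0 0, congrFun h0 1, congrFun h0 2⟩

lemma indep4' {z1 z2 z3 z4 c1 c2 c3 c4 : F} (h12 : z1 ≠ z2) (h13 : z1 ≠ z3) (h14 : z1 ≠ z4)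
    (h23 : z2 ≠ z3) (h24 : z2 ≠ z4) (h34 : z3 ≠ z4)
    (h : c1 • mvec z1 + c2 • mvec z2 + c3 • mvec z3 + c4 • mvec z4 = 0) :
    c1 = 0 ∧ c2 = 0 ∧ c3 = 0 ∧ c4 = 0 := by
  have hz : Function.Injective ![z1,z2,z3,z4] := by
    intro i j hij
    fin_cases i <;> fin_cases j <;> first | rfl | (exfalso; simp_all)
  have h' : ∑ i : Fin 4, (![c1,c2,c3,c4]) i • mvec ((![z1,z2,z3,z4]) i) = 0 := by
    simpa [Fin.sum_univ_four] using h
  have h0 := indep_gen (by norm_num) hz h'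
  exact ⟨congrFun h0 0, congrFun h0 1, congrFun h0 2, congrFun h0 3⟩

lemma dir_eq' {m l β α c d e g : F}
    (hml : m ≠ l) (hlβ : l ≠ β) (hβα : β ≠ α) (hαm : α ≠ m)
    (hc : c ≠ 0) (hd : d ≠ 0) (_he : e ≠ 0) (_hg : g ≠ 0)
    (heq : c • mvec m + d • mvec l + e • mvec β + g • mvec α = 0) : l = α := by
  by_contra hlα
  by_cases hmβ : m = β
  · subst hmβ
    have h3 : (c + e) • mvec m + d • mvec l + g • mvec α = 0 := by
      have : (c + e) • mvec m + d • mvec l + g • mvec α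
          = c • mvec m + d • mvec l + e • mvec m + g • mvec α := by
        rw [add_smul]; abel
      rw [this, heq]
    exact hd (indep3' hml (Ne.symm hαm) hlα h3).2.1
  · exact hc (indep4' hml hmβ (Ne.symm hαm) hlβ hlα hβα heq).1

lemma lineThrough_eq_of_mem {x p : Fin 4 → F} {z : F} (h : p ∈ lineThrough x z) :
    lineThrough x z = lineThrough p z := by
  obtain ⟨y0, hy0⟩ := h
  ext q
  constructor
  · rintro ⟨y, rfl⟩
    exact ⟨y - y0, by rw [hy0, sub_smul]; abel⟩
  · rintro ⟨y, rfl⟩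
    exact ⟨y0 + y, by rw [hy0, add_smul]; abel⟩

lemma exists_diff {x p r : Fin 4 → F} {z : F} (hp : p ∈ lineThrough x z)
    (hr : r ∈ lineThrough x z) : ∃ c : F, r - p = c • mvec z := by
  obtain ⟨y1, hy1⟩ := hp
  obtain ⟨y2, hy2⟩ := hr
  exact ⟨y2 - y1, by rw [hy1, hy2, sub_smul]; abel⟩

lemma path_dir {xM xL xA xB p r a b : Fin 4 → F} {m t α β : F}
    (hpM : p ∈ lineThrough xM m) (hrM : r ∈ lineThrough xM m) (hrL : r ∈ lineThrough xL t)
    (hbL : b ∈ lineThrough xL t) (hbB : b ∈ lineThrough xB β) (haB : a ∈ lineThrough xB β)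
    (haA : a ∈ lineThrough xA α) (hpA : p ∈ lineThrough xA α)
    (hpr : p ≠ r) (hrb : r ≠ b) (hba : b ≠ a) (hap : a ≠ p)
    (hML : lineThrough xM m ≠ lineThrough xL t) (hLB : lineThrough xL t ≠ lineThrough xB β)
    (hBA : lineThrough xB β ≠ lineThrough xA α) (hAM : lineThrough xA α ≠ lineThrough xM m) :
    lineThrough xA α = lineThrough p t := by
  have dmt : m ≠ t := by
    rintro rfl
    exact hML ((lineThrough_eq_of_mem hrM).trans (lineThrough_eq_of_mem hrL).symm)
  have dtβ : t ≠ β := by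
    rintro rfl
    exact hLB ((lineThrough_eq_of_mem hbL).trans (lineThrough_eq_of_mem hbB).symm)
  have dβα : β ≠ α := by
    rintro rfl
    exact hBA ((lineThrough_eq_of_mem haB).trans (lineThrough_eq_of_mem haA).symm)
  have dαm : α ≠ m := by
    rintro rfl
    exact hAM ((lineThrough_eq_of_mem hpA).trans (lineThrough_eq_of_mem hpM).symm)
  obtain ⟨c, hc⟩ := exists_diff hpM hrM
  obtain ⟨d, hd⟩ := exists_diff hrL hbL
  obtain ⟨e, he⟩ := exists_diff hbB haB
  obtain ⟨g, hg⟩ := exists_diff haA hpA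
  have hsum : c • mvec m + d • mvec t + e • mvec β + g • mvec α = 0 := by
    rw [← hc, ← hd, ← he, ← hg]; abel
  have hc0 : c ≠ 0 := by
    rintro rfl
    rw [zero_smul, sub_eq_zero] at hc
    exact hpr hc.symm
  have hd0 : d ≠ 0 := by
    rintro rfl
    rw [zero_smul, sub_eq_zero] at hd
    exact hrb hd.symm
  have he0 : e ≠ 0 := by
    rintro rfl
    rw [zero_smul, sub_eq_zero] at he
    exact hba he.symm
  have hg0 : g ≠ 0 := by
    rintro rfl
    rw [zero_smul, sub_eq_zero] at hg
    exact hap hg.symm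
  have htα : t = α := dir_eq' dmt dtβ dβα dαm hc0 hd0 he0 hg0 hsum
  rw [lineThrough_eq_of_mem hpA, ← htα]

lemma incAdj_inl {p : Fin 4 → F} {b : IncVert F} (h : (incGraph F).Adj (Sum.inl p) b) :
    ∃ l : {l : Set (Fin 4 → F) // IsMomentLine l}, b = Sum.inr l ∧ p ∈ l.1 := by
  simp only [incGraph, SimpleGraph.fromRel_adj] at h
  obtain ⟨-, h | h⟩ := h
  · obtain ⟨p', l, hp, hb, hm⟩ := h
    refine ⟨l, hb, ?_⟩
    rwa [← Sum.inl.injEq p p' |>.mp hp] at hm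
  · obtain ⟨p', l, _, hb, _⟩ := h
    exact absurd hb (by simp)

lemma incAdj_inr {l : {l : Set (Fin 4 → F) // IsMomentLine l}} {b : IncVert F}
    (h : (incGraph F).Adj (Sum.inr l) b) : ∃ p : Fin 4 → F, b = Sum.inl p ∧ p ∈ l.1 := by
  simp only [incGraph, SimpleGraph.fromRel_adj] at h
  obtain ⟨-, h | h⟩ := h
  · obtain ⟨p', l', hp, _, _⟩ := h
    exact absurd hp (by simp)
  · obtain ⟨p', l', hb, hl, hm⟩ := h
    obtain rfl := Sum.inr_injective hl
    exact ⟨p', hb, hm⟩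

lemma extract' (pp : Fin 4 → F)
    (w m0 m1 s10 s11 s12 s13 s20 s21 s22 s23 : IncVert F)
    (h1 : (incGraph F).Adj (Sum.inl pp) m0) (h2 : (incGraph F).Adj m0 m1)
    (h3 : (incGraph F).Adj m1 w)
    (h4 : (incGraph F).Adj (Sum.inl pp) s10) (h5 : (incGraph F).Adj s10 s11)
    (h6 : (incGraph F).Adj s11 s12) (h7 : (incGraph F).Adj s12 s13)
    (h8 : (incGraph F).Adj s13 w)
    (h9 : (incGraph F).Adj (Sum.inl pp) s20) (h10 : (incGraph F).Adj s20 s21)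
    (h11 : (incGraph F).Adj s21 s22) (h12 : (incGraph F).Adj s22 s23)
    (h13 : (incGraph F).Adj s23 w)
    (n1 : Sum.inl pp ≠ m1) (n2 : m1 ≠ s13) (n3 : m1 ≠ s23)
    (n4 : s13 ≠ s11) (n5 : s23 ≠ s21) (n6 : s11 ≠ Sum.inl pp) (n7 : s21 ≠ Sum.inl pp)
    (n8 : m0 ≠ w) (n9 : w ≠ s12) (n10 : w ≠ s22) (n11 : s12 ≠ s10) (n12 : s22 ≠ s20)
    (n13 : s10 ≠ m0) (n14 : s20 ≠ m0) (n15 : s10 ≠ s20) : False := by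
  obtain ⟨M, rfl, hpM⟩ := incAdj_inl h1
  obtain ⟨r, rfl, hrM⟩ := incAdj_inr h2
  obtain ⟨L, rfl, hrL⟩ := incAdj_inl h3
  obtain ⟨A1, rfl, hpA1⟩ := incAdj_inl h4
  obtain ⟨a1, rfl, ha1A1⟩ := incAdj_inr h5
  obtain ⟨B1, rfl, ha1B1⟩ := incAdj_inl h6
  obtain ⟨b1, rfl, hb1B1⟩ := incAdj_inr h7
  obtain ⟨L', hL', hb1L⟩ := incAdj_inl h8
  obtain rfl := Sum.inr_injective hL'
  obtain ⟨A2, rfl, hpA2⟩ := incAdj_inl h9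
  obtain ⟨a2, rfl, ha2A2⟩ := incAdj_inr h10
  obtain ⟨B2, rfl, ha2B2⟩ := incAdj_inl h11
  obtain ⟨b2, rfl, hb2B2⟩ := incAdj_inr h12
  obtain ⟨L'', hL'', hb2L⟩ := incAdj_inl h13
  obtain rfl := Sum.inr_injective hL''
  have ptne : ∀ {x y : Fin 4 → F}, (Sum.inl x : IncVert F) ≠ Sum.inl y → x ≠ y :=
    fun h hxy => h (congrArg Sum.inl hxy)
  have setne : ∀ {X Y : {l : Set (Fin 4 → F) // IsMomentLine l}},
      (Sum.inr X : IncVert F) ≠ Sum.inr Y → X.1 ≠ Y.1 :=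
    fun hXY h => hXY (congrArg Sum.inr (Subtype.ext h))
  obtain ⟨xM, m, hMeq⟩ := M.2
  obtain ⟨xL, t, hLeq⟩ := L.2
  obtain ⟨xA1, α1, hA1eq⟩ := A1.2
  obtain ⟨xB1, β1, hB1eq⟩ := B1.2
  obtain ⟨xA2, α2, hA2eq⟩ := A2.2
  obtain ⟨xB2, β2, hB2eq⟩ := B2.2
  rw [hMeq] at hpM hrM
  rw [hLeq] at hrL hb1L hb2L
  rw [hA1eq] at hpA1 ha1A1
  rw [hB1eq] at ha1B1 hb1B1
  rw [hA2eq] at hpA2 ha2A2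
  rw [hB2eq] at ha2B2 hb2B2
  have hML := setne n8; rw [hMeq, hLeq] at hML
  have hLB1 := setne n9; rw [hLeq, hB1eq] at hLB1
  have hB1A1 := setne n11; rw [hB1eq, hA1eq] at hB1A1
  have hA1M := setne n13; rw [hA1eq, hMeq] at hA1M
  have hLB2 := setne n10; rw [hLeq, hB2eq] at hLB2
  have hB2A2 := setne n12; rw [hB2eq, hA2eq] at hB2A2
  have hA2M := setne n14; rw [hA2eq, hMeq] at hA2M
  have e1 : lineThrough xA1 α1 = lineThrough pp t :=
    path_dir hpM hrM hrL hb1L hb1B1 ha1B1 ha1A1 hpA1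
      (ptne n1) (ptne n2) (ptne n4) (ptne n6) hML hLB1 hB1A1 hA1M
  have e2 : lineThrough xA2 α2 = lineThrough pp t :=
    path_dir hpM hrM hrL hb2L hb2B2 ha2B2 ha2A2 hpA2
      (ptne n1) (ptne n3) (ptne n5) (ptne n7) hML hLB2 hB2A2 hA2M
  exact setne n15 (by rw [hA1eq, hA2eq, e1, e2])

end ThetaAux

/-- The incidence graph `G(q)` contains no copy of `Θ_{3,5,5}`. -/
theorem incGraph_theta355_free (F : Type*) [Field F] [Fintype F] :
    ¬ ContainsCopy (thetaGraph 3 ![3, 5, 5]) (incGraph F) := by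
  rintro ⟨f, hf⟩
  have NE : ∀ {x y : Fin 2 ⊕ (Σ i : Fin 3, Fin (![3,5,5] i - 1))}, x ≠ y → f x ≠ f y :=
    fun hxy h => hxy (hf h)
  have ta : ∀ {x y}, (thetaGraph 3 ![3,5,5]).Adj x y → (incGraph F).Adj (f x) (f y) :=
    fun h => f.map_adj h
  have E1 : (thetaGraph 3 ![3,5,5]).Adj (Sum.inl 0) (Sum.inr ⟨0, ⟨0, by decide⟩⟩) := by
    rw [thetaGraph, SimpleGraph.fromRel_adj]
    exact ⟨by decide, Or.inl (Or.inr (Or.inl ⟨0, ⟨0, by decide⟩, rfl, rfl, rfl⟩))⟩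
  have E2 : (thetaGraph 3 ![3,5,5]).Adj (Sum.inr ⟨0, ⟨0, by decide⟩⟩) (Sum.inr ⟨0, ⟨1, by decide⟩⟩) := by
    rw [thetaGraph, SimpleGraph.fromRel_adj]
    exact ⟨by decide, Or.inl (Or.inr (Or.inr (Or.inr
      ⟨0, ⟨0, by decide⟩, ⟨1, by decide⟩, rfl, rfl, rfl⟩)))⟩
  have E3 : (thetaGraph 3 ![3,5,5]).Adj (Sum.inl 1) (Sum.inr ⟨0, ⟨1, by decide⟩⟩) := by
    rw [thetaGraph, SimpleGraph.fromRel_adj]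
    exact ⟨by decide, Or.inl (Or.inr (Or.inr (Or.inl ⟨0, ⟨1, by decide⟩, rfl, rfl, by decide⟩)))⟩
  have E4 : (thetaGraph 3 ![3,5,5]).Adj (Sum.inl 0) (Sum.inr ⟨1, ⟨0, by decide⟩⟩) := by
    rw [thetaGraph, SimpleGraph.fromRel_adj]
    exact ⟨by decide, Or.inl (Or.inr (Or.inl ⟨1, ⟨0, by decide⟩, rfl, rfl, rfl⟩))⟩
  have E5 : (thetaGraph 3 ![3,5,5]).Adj (Sum.inr ⟨1, ⟨0, by decide⟩⟩) (Sum.inr ⟨1, ⟨1, by decide⟩⟩) := by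
    rw [thetaGraph, SimpleGraph.fromRel_adj]
    exact ⟨by decide, Or.inl (Or.inr (Or.inr (Or.inr
      ⟨1, ⟨0, by decide⟩, ⟨1, by decide⟩, rfl, rfl, rfl⟩)))⟩
  have E6 : (thetaGraph 3 ![3,5,5]).Adj (Sum.inr ⟨1, ⟨1, by decide⟩⟩) (Sum.inr ⟨1, ⟨2, by decide⟩⟩) := by
    rw [thetaGraph, SimpleGraph.fromRel_adj]
    exact ⟨by decide, Or.inl (Or.inr (Or.inr (Or.inr
      ⟨1, ⟨1, by decide⟩, ⟨2, by decide⟩, rfl, rfl, rfl⟩)))⟩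
  have E7 : (thetaGraph 3 ![3,5,5]).Adj (Sum.inr ⟨1, ⟨2, by decide⟩⟩) (Sum.inr ⟨1, ⟨3, by decide⟩⟩) := by
    rw [thetaGraph, SimpleGraph.fromRel_adj]
    exact ⟨by decide, Or.inl (Or.inr (Or.inr (Or.inr
      ⟨1, ⟨2, by decide⟩, ⟨3, by decide⟩, rfl, rfl, rfl⟩)))⟩
  have E8 : (thetaGraph 3 ![3,5,5]).Adj (Sum.inl 1) (Sum.inr ⟨1, ⟨3, by decide⟩⟩) := by
    rw [thetaGraph, SimpleGraph.fromRel_adj]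
    exact ⟨by decide, Or.inl (Or.inr (Or.inr (Or.inl ⟨1, ⟨3, by decide⟩, rfl, rfl, by decide⟩)))⟩
  have E9 : (thetaGraph 3 ![3,5,5]).Adj (Sum.inl 0) (Sum.inr ⟨2, ⟨0, by decide⟩⟩) := by
    rw [thetaGraph, SimpleGraph.fromRel_adj]
    exact ⟨by decide, Or.inl (Or.inr (Or.inl ⟨2, ⟨0, by decide⟩, rfl, rfl, rfl⟩))⟩
  have E10 : (thetaGraph 3 ![3,5,5]).Adj (Sum.inr ⟨2, ⟨0, by decide⟩⟩) (Sum.inr ⟨2, ⟨1, by decide⟩⟩) := by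
    rw [thetaGraph, SimpleGraph.fromRel_adj]
    exact ⟨by decide, Or.inl (Or.inr (Or.inr (Or.inr
      ⟨2, ⟨0, by decide⟩, ⟨1, by decide⟩, rfl, rfl, rfl⟩)))⟩
  have E11 : (thetaGraph 3 ![3,5,5]).Adj (Sum.inr ⟨2, ⟨1, by decide⟩⟩) (Sum.inr ⟨2, ⟨2, by decide⟩⟩) := by
    rw [thetaGraph, SimpleGraph.fromRel_adj]
    exact ⟨by decide, Or.inl (Or.inr (Or.inr (Or.inr
      ⟨2, ⟨1, by decide⟩, ⟨2, by decide⟩, rfl, rfl, rfl⟩)))⟩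
  have E12 : (thetaGraph 3 ![3,5,5]).Adj (Sum.inr ⟨2, ⟨2, by decide⟩⟩) (Sum.inr ⟨2, ⟨3, by decide⟩⟩) := by
    rw [thetaGraph, SimpleGraph.fromRel_adj]
    exact ⟨by decide, Or.inl (Or.inr (Or.inr (Or.inr
      ⟨2, ⟨2, by decide⟩, ⟨3, by decide⟩, rfl, rfl, rfl⟩)))⟩
  have E13 : (thetaGraph 3 ![3,5,5]).Adj (Sum.inl 1) (Sum.inr ⟨2, ⟨3, by decide⟩⟩) := by
    rw [thetaGraph, SimpleGraph.fromRel_adj]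
    exact ⟨by decide, Or.inl (Or.inr (Or.inr (Or.inl ⟨2, ⟨3, by decide⟩, rfl, rfl, by decide⟩)))⟩
  rcases hu : f (Sum.inl 0) with p | l
  · exact extract' p (f (Sum.inl 1))
      (f (Sum.inr ⟨0, ⟨0, by decide⟩⟩)) (f (Sum.inr ⟨0, ⟨1, by decide⟩⟩))
      (f (Sum.inr ⟨1, ⟨0, by decide⟩⟩)) (f (Sum.inr ⟨1, ⟨1, by decide⟩⟩))
      (f (Sum.inr ⟨1, ⟨2, by decide⟩⟩)) (f (Sum.inr ⟨1, ⟨3, by decide⟩⟩))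
      (f (Sum.inr ⟨2, ⟨0, by decide⟩⟩)) (f (Sum.inr ⟨2, ⟨1, by decide⟩⟩))
      (f (Sum.inr ⟨2, ⟨2, by decide⟩⟩)) (f (Sum.inr ⟨2, ⟨3, by decide⟩⟩))
      (by rw [← hu]; exact ta E1) (ta E2) ((ta E3).symm)
      (by rw [← hu]; exact ta E4) (ta E5) (ta E6) (ta E7) ((ta E8).symm)
      (by rw [← hu]; exact ta E9) (ta E10) (ta E11) (ta E12) ((ta E13).symm)
      (by rw [← hu]; exact NE (by decide)) (NE (by decide)) (NE (by decide))
      (NE (by decide)) (NE (by decide))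
      (by rw [← hu]; exact NE (by decide)) (by rw [← hu]; exact NE (by decide))
      (NE (by decide)) (NE (by decide)) (NE (by decide)) (NE (by decide)) (NE (by decide))
      (NE (by decide)) (NE (by decide)) (NE (by decide))
  · have c1 : (incGraph F).Adj (Sum.inr l) (f (Sum.inr ⟨0, ⟨0, by decide⟩⟩)) := by
      rw [← hu]; exact ta E1
    obtain ⟨r0, hr0, -⟩ := incAdj_inr c1
    have c2 : (incGraph F).Adj (Sum.inl r0) (f (Sum.inr ⟨0, ⟨1, by decide⟩⟩)) := by
      rw [← hr0]; exact ta E2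
    obtain ⟨M0, hM0, -⟩ := incAdj_inl c2
    have c3 : (incGraph F).Adj (Sum.inr M0) (f (Sum.inl 1)) := by
      rw [← hM0]; exact (ta E3).symm
    obtain ⟨p, hp, -⟩ := incAdj_inr c3
    exact extract' p (f (Sum.inl 0))
      (f (Sum.inr ⟨0, ⟨1, by decide⟩⟩)) (f (Sum.inr ⟨0, ⟨0, by decide⟩⟩))
      (f (Sum.inr ⟨1, ⟨3, by decide⟩⟩)) (f (Sum.inr ⟨1, ⟨2, by decide⟩⟩))
      (f (Sum.inr ⟨1, ⟨1, by decide⟩⟩)) (f (Sum.inr ⟨1, ⟨0, by decide⟩⟩))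
      (f (Sum.inr ⟨2, ⟨3, by decide⟩⟩)) (f (Sum.inr ⟨2, ⟨2, by decide⟩⟩))
      (f (Sum.inr ⟨2, ⟨1, by decide⟩⟩)) (f (Sum.inr ⟨2, ⟨0, by decide⟩⟩))
      (by rw [← hp]; exact ta E3) ((ta E2).symm) ((ta E1).symm)
      (by rw [← hp]; exact ta E8) ((ta E7).symm) ((ta E6).symm) ((ta E5).symm) ((ta E4).symm)
      (by rw [← hp]; exact ta E13) ((ta E12).symm) ((ta E11).symm) ((ta E10).symm) ((ta E9).symm)
      (by rw [← hp]; exact NE (by decide)) (NE (by decide)) (NE (by decide))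
      (NE (by decide)) (NE (by decide))
      (by rw [← hp]; exact NE (by decide)) (by rw [← hp]; exact NE (by decide))
      (NE (by decide)) (NE (by decide)) (NE (by decide)) (NE (by decide)) (NE (by decide))
      (NE (by decide)) (NE (by decide)) (NE (by decide))
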